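/- If there exist scalars α_j ≥ 0, j = 1,…,J, such that diag(I_{n_d},U) Φ diag(I_{n_d},U)ᵀ − Σ_{j=1}^J α_j · diag(E_j,U_j) Φ_j diag(E_j,U_j)ᵀ ⪰ 0, then 𝒟_str ⊆ 𝒟̄(Φ). -/

import Mathlib

open Matrix

noncomputable section

/-- Moore–Penrose pseudoinverse of a real square matrix, defined via classical choice
(the Moore–Penrose inverse exists and is unique for real matrices). -/
def pinv {k : Type*} [Fintype k] (A : Matrix k k ℝ) : Matrix k k ℝ := by
  classical
  exact if h : ∃ B : Matrix k k ℝ,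
      A * B * A = A ∧ B * A * B = B ∧ (A * B)ᵀ = A * B ∧ (B * A)ᵀ = B * A
    then h.choose else 0

/-- Positive semidefinite square root of a real matrix (junk value `0` if not PSD). -/
def msqrt {k : Type*} [Fintype k] [DecidableEq k] (A : Matrix k k ℝ) : Matrix k k ℝ := by
  classical
  exact if h : A.PosSemidef then
      (h.1.eigenvectorUnitary : Matrix k k ℝ) *
        diagonal ((fun x : ℝ => (RCLike.ofReal x : ℝ)) ∘ (Real.sqrt ·) ∘ h.1.eigenvalues) *
        (star h.1.eigenvectorUnitary : Matrix k k ℝ)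
    else 0

/-- `Z_{q,r}(N) = { Z : [I; Z]ᵀ N [I; Z] ⪰ 0 }`. -/
def ZSet {q r : Type*} [Fintype q] [Fintype r] [DecidableEq q]
    (N : Matrix (q ⊕ r) (q ⊕ r) ℝ) : Set (Matrix r q ℝ) :=
  {Z | ((fromRows (1 : Matrix q q ℝ) Z)ᵀ * N * fromRows (1 : Matrix q q ℝ) Z).PosSemidef}

/-- `Z⁺_{q,r}(N) = { Z : [I; Z]ᵀ N [I; Z] ≻ 0 }`. -/
def ZSetP {q r : Type*} [Fintype q] [Fintype r] [DecidableEq q]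
    (N : Matrix (q ⊕ r) (q ⊕ r) ℝ) : Set (Matrix r q ℝ) :=
  {Z | ((fromRows (1 : Matrix q q ℝ) Z)ᵀ * N * fromRows (1 : Matrix q q ℝ) Z).PosDef}

/-- `Π_{q,r}`: symmetric matrices `N` with `N₂₂ ⪯ 0`, `ker N₂₂ ⊆ ker N₁₂` and
`N₁₁ - N₁₂ N₂₂† N₁₂ᵀ ⪰ 0`. -/
def PiSet (q r : Type*) [Fintype q] [Fintype r] : Set (Matrix (q ⊕ r) (q ⊕ r) ℝ) :=
  {N | N.IsSymm ∧ (-(N.toBlocks₂₂)).PosSemidef ∧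
      (∀ x : r → ℝ, N.toBlocks₂₂ *ᵥ x = 0 → N.toBlocks₁₂ *ᵥ x = 0) ∧
      (N.toBlocks₁₁ - N.toBlocks₁₂ * pinv N.toBlocks₂₂ * (N.toBlocks₁₂)ᵀ).PosSemidef}

/-- Selector matrix `U_j = [0; I_{T_j}; 0]` placing the `j`-th block inside the
stacked index `Σ_k T_k`. -/
def Usel {J : ℕ} (TT : Fin J → ℕ) (j : Fin J) :
    Matrix ((k : Fin J) × Fin (TT k)) (Fin (TT j)) ℝ :=
  Matrix.of fun i t => if i = ⟨j, t⟩ then 1 else 0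

/-- `U = Σ_j U_j F_j`. -/
def Umat {J T : ℕ} (TT : Fin J → ℕ) (F : (j : Fin J) → Matrix (Fin (TT j)) (Fin T) ℝ) :
    Matrix ((k : Fin J) × Fin (TT k)) (Fin T) ℝ :=
  ∑ j, Usel TT j * F j
/-- The structured perturbation set `𝒟_str`. -/
def DstrSet {J nd T : ℕ} (nn TT : Fin J → ℕ)
    (E : (j : Fin J) → Matrix (Fin nd) (Fin (nn j)) ℝ)
    (F : (j : Fin J) → Matrix (Fin (TT j)) (Fin T) ℝ)
    (Φs : (j : Fin J) → Matrix (Fin (nn j) ⊕ Fin (TT j)) (Fin (nn j) ⊕ Fin (TT j)) ℝ) :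
    Set (Matrix (Fin nd) (Fin T) ℝ) :=
  {Δ | ∃ Δs : (j : Fin J) → Matrix (Fin (nn j)) (Fin (TT j)) ℝ,
      (∀ j, (Δs j)ᵀ ∈ ZSet (Φs j)) ∧ Δ = ∑ j, E j * Δs j * F j}

/-- `𝒟̄(Φ)`. -/
def DbarSet {nd T : ℕ} (Φ : Matrix (Fin nd ⊕ Fin T) (Fin nd ⊕ Fin T) ℝ) :
    Set (Matrix (Fin nd) (Fin T) ℝ) :=
  {Δ | Δᵀ ∈ ZSet Φ}

/-- `Ψ_j = diag(E_j, U_j) Φ_j diag(E_j, U_j)ᵀ`. -/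
def PsiJ {J nd : ℕ} (nn TT : Fin J → ℕ)
    (E : (j : Fin J) → Matrix (Fin nd) (Fin (nn j)) ℝ)
    (Φs : (j : Fin J) → Matrix (Fin (nn j) ⊕ Fin (TT j)) (Fin (nn j) ⊕ Fin (TT j)) ℝ)
    (j : Fin J) :
    Matrix (Fin nd ⊕ (k : Fin J) × Fin (TT k)) (Fin nd ⊕ (k : Fin J) × Fin (TT k)) ℝ :=
  fromBlocks (E j) 0 0 (Usel TT j) * Φs j * (fromBlocks (E j) 0 0 (Usel TT j))ᵀ

/-- `Ψ = diag(I, U) Φ diag(I, U)ᵀ`. -/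
def PsiU {J nd T : ℕ} (TT : Fin J → ℕ)
    (F : (j : Fin J) → Matrix (Fin (TT j)) (Fin T) ℝ)
    (Φ : Matrix (Fin nd ⊕ Fin T) (Fin nd ⊕ Fin T) ℝ) :
    Matrix (Fin nd ⊕ (k : Fin J) × Fin (TT k)) (Fin nd ⊕ (k : Fin J) × Fin (TT k)) ℝ :=
  fromBlocks (1 : Matrix (Fin nd) (Fin nd) ℝ) 0 0 (Umat TT F) * Φ *
    (fromBlocks (1 : Matrix (Fin nd) (Fin nd) ℝ) 0 0 (Umat TT F))ᵀ

lemma psd_add' {n : Type*} [Fintype n] {A B : Matrix n n ℝ} (hA : A.PosSemidef)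
    (hB : B.PosSemidef) : (A + B).PosSemidef := by
  exact hA.add hB

lemma psd_smul' {n : Type*} [Fintype n] {A : Matrix n n ℝ} (hA : A.PosSemidef) {c : ℝ}
    (hc : 0 ≤ c) : (c • A).PosSemidef := by
  exact hA.smul hc

lemma psd_sum' {n ι : Type*} [Fintype n] (s : Finset ι) (f : ι → Matrix n n ℝ)
    (h : ∀ i ∈ s, (f i).PosSemidef) : (∑ i ∈ s, f i).PosSemidef := by
  classical
  induction s using Finset.induction with
  | empty => simpa using Matrix.PosSemidef.zero
  | insert _ _ hx ih =>
    rw [Finset.sum_insert hx]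
    exact psd_add' (h _ (Finset.mem_insert_self _ _))
      (ih fun i hi => h i (Finset.mem_insert_of_mem hi))

lemma psd_transpose_mul_mul {n m : Type*} [Fintype n] [Fintype m] {A : Matrix n n ℝ}
    (hA : A.PosSemidef) (B : Matrix n m ℝ) : (Bᵀ * A * B).PosSemidef := by
  simpa using hA.conjTranspose_mul_mul_same B

theorem stmt15 {J nd T : ℕ} (hJ : 0 < J) (hnd : 0 < nd) (hT : 0 < T)
    (nn TT : Fin J → ℕ)
    (E : (j : Fin J) → Matrix (Fin nd) (Fin (nn j)) ℝ)
    (F : (j : Fin J) → Matrix (Fin (TT j)) (Fin T) ℝ)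
    (Φs : (j : Fin J) → Matrix (Fin (nn j) ⊕ Fin (TT j)) (Fin (nn j) ⊕ Fin (TT j)) ℝ)
    (hΦs : ∀ j, Φs j ∈ PiSet (Fin (nn j)) (Fin (TT j)))
    (Φ : Matrix (Fin nd ⊕ Fin T) (Fin nd ⊕ Fin T) ℝ)
    (hfe : ∃ αs : Fin J → ℝ, (∀ j, 0 ≤ αs j) ∧
      (PsiU TT F Φ - ∑ j, αs j • PsiJ nn TT E Φs j).PosSemidef) :
    DstrSet nn TT E F Φs ⊆ DbarSet Φ := by
  rintro Δ ⟨Δs, hZ, rfl⟩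
  obtain ⟨α, hα, hPSD⟩ := hfe
  classical
  -- stacked matrix W and lifted matrix L
  set W : Matrix ((k : Fin J) × Fin (TT k)) (Fin nd) ℝ :=
    Matrix.of (fun p i => ((Δs p.1)ᵀ * (E p.1)ᵀ) p.2 i) with hWdef
  set L : Matrix (Fin nd ⊕ (k : Fin J) × Fin (TT k)) (Fin nd) ℝ :=
    fromRows (1 : Matrix (Fin nd) (Fin nd) ℝ) W with hLdef
  have hUW : ∀ j : Fin J, (Usel TT j)ᵀ * W = (Δs j)ᵀ * (E j)ᵀ := by
    intro j
    ext t i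
    simp only [Matrix.mul_apply, transpose_apply, Usel, Matrix.of_apply, hWdef,
      ite_mul, one_mul, zero_mul]
    rw [Finset.sum_ite_eq' Finset.univ (⟨j, t⟩ : (k : Fin J) × Fin (TT k))]
    simp
  have hUmatW : (Umat TT F)ᵀ * W = (∑ j, E j * Δs j * F j)ᵀ := by
    rw [Umat, transpose_sum, Matrix.sum_mul, transpose_sum]
    refine Finset.sum_congr rfl fun j _ => ?_
    rw [transpose_mul, Matrix.mul_assoc, hUW j, transpose_mul, transpose_mul]
  have hA : fromRows (1 : Matrix (Fin nd) (Fin nd) ℝ) (∑ j, E j * Δs j * F j)ᵀ =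
      (fromBlocks (1 : Matrix (Fin nd) (Fin nd) ℝ) 0 0 (Umat TT F))ᵀ * L := by
    rw [fromBlocks_transpose, transpose_zero, transpose_zero, transpose_one, hLdef,
      fromBlocks_mul_fromRows]
    rw [hUmatW]
    simp
  have hLPsiJ : ∀ j : Fin J, Lᵀ * PsiJ nn TT E Φs j * L =
      E j * ((fromRows (1 : Matrix (Fin (nn j)) (Fin (nn j)) ℝ) (Δs j)ᵀ)ᵀ * Φs j *
        fromRows (1 : Matrix (Fin (nn j)) (Fin (nn j)) ℝ) (Δs j)ᵀ) * (E j)ᵀ := by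
    intro j
    have hBL : (fromBlocks (E j) 0 0 (Usel TT j))ᵀ * L =
        fromRows (1 : Matrix (Fin (nn j)) (Fin (nn j)) ℝ) (Δs j)ᵀ * (E j)ᵀ := by
      rw [fromBlocks_transpose, transpose_zero, transpose_zero, hLdef,
        fromBlocks_mul_fromRows, fromRows_mul]
      rw [hUW j]
      simp [Matrix.mul_assoc]
    have hLB : Lᵀ * fromBlocks (E j) 0 0 (Usel TT j) =
        E j * (fromRows (1 : Matrix (Fin (nn j)) (Fin (nn j)) ℝ) (Δs j)ᵀ)ᵀ := by
      simpa only [Matrix.transpose_mul, transpose_transpose] using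
        congrArg Matrix.transpose hBL
    rw [PsiJ]
    calc Lᵀ * (fromBlocks (E j) 0 0 (Usel TT j) * Φs j *
          (fromBlocks (E j) 0 0 (Usel TT j))ᵀ) * L
        = (Lᵀ * fromBlocks (E j) 0 0 (Usel TT j)) * Φs j *
          ((fromBlocks (E j) 0 0 (Usel TT j))ᵀ * L) := by
          simp only [Matrix.mul_assoc]
      _ = _ := by rw [hLB, hBL]; simp only [Matrix.mul_assoc]
  -- main computation
  set G : Matrix (Fin nd ⊕ (k : Fin J) × Fin (TT k)) (Fin nd ⊕ Fin T) ℝ :=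
    fromBlocks (1 : Matrix (Fin nd) (Fin nd) ℝ) 0 0 (Umat TT F) with hGdef
  set S : Matrix (Fin nd ⊕ (k : Fin J) × Fin (TT k)) (Fin nd ⊕ (k : Fin J) × Fin (TT k)) ℝ :=
    ∑ j, α j • PsiJ nn TT E Φs j with hSdef
  show ((fromRows (1 : Matrix (Fin nd) (Fin nd) ℝ) (∑ j, E j * Δs j * F j)ᵀ)ᵀ * Φ *
      fromRows (1 : Matrix (Fin nd) (Fin nd) ℝ) (∑ j, E j * Δs j * F j)ᵀ).PosSemidef
  have key : (fromRows (1 : Matrix (Fin nd) (Fin nd) ℝ) (∑ j, E j * Δs j * F j)ᵀ)ᵀ * Φ *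
      fromRows (1 : Matrix (Fin nd) (Fin nd) ℝ) (∑ j, E j * Δs j * F j)ᵀ =
      Lᵀ * (PsiU TT F Φ - S) * L + ∑ j, α j • (Lᵀ * PsiJ nn TT E Φs j * L) := by
    have hspl : (PsiU TT F Φ - S) + S = PsiU TT F Φ := by abel
    calc (fromRows (1 : Matrix (Fin nd) (Fin nd) ℝ) (∑ j, E j * Δs j * F j)ᵀ)ᵀ * Φ *
        fromRows (1 : Matrix (Fin nd) (Fin nd) ℝ) (∑ j, E j * Δs j * F j)ᵀ
        = Lᵀ * (G * Φ * Gᵀ) * L := by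
          rw [hA, Matrix.transpose_mul, transpose_transpose]
          simp only [Matrix.mul_assoc]
      _ = Lᵀ * ((PsiU TT F Φ - S) + S) * L := by rw [hspl]; rw [PsiU, hGdef]
      _ = Lᵀ * (PsiU TT F Φ - S) * L + Lᵀ * S * L := by
          rw [Matrix.mul_add, Matrix.add_mul]
      _ = _ := by
          congr 1
          rw [hSdef, Matrix.mul_sum, Matrix.sum_mul]
          refine Finset.sum_congr rfl fun j _ => ?_
          rw [Matrix.mul_smul, Matrix.smul_mul]
  rw [key]
  refine psd_add' (psd_transpose_mul_mul hPSD L) ?_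
  refine psd_sum' _ _ fun j _ => ?_
  rw [hLPsiJ j]
  exact psd_smul' (psd_transpose_mul_mul (hZ j) (E j)ᵀ) (hα j)

end
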